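/- arXiv:q-alg/9612005 — 2 statements merged into one kernel-verified Lean document; each statement's English description precedes it below -/
import Mathlib

section
/- Let V be a finite type, let G be a connected simple graph on V, and let σ be a sign assignment giving each edge of G a value +1 or −1. Assume that every cycle of G is monochromatic, i.e., for every walk in G that is a cycle, all edges traversed by the cycle have the same sign. Then for any two spanning trees T₁ and T₂ of G, the sum of the signs of the edges of G that do not belong to T₁ equals the sum of the signs of the edges of G that do not belong to T₂. (This is the graph-theoretic core of Proposition 1: the nullification writhe of a reduced alternating link projection is independent of the choice of the nullification set, expressed on the Seifert graph, where nullification sets correspond exactly to complements of spanning trees.) -/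
/-!
Any spanning tree can be turned into any other by exchanges `T ↦ T - e + f`: take an edge `f`
of the other tree that is not in `T`, and on the path of `T` joining its ends an edge `e` that
is not in the other tree (one exists, as the other tree is acyclic). The edges `e` and `f` lie on
a common cycle of `G`, hence carry the same sign, so every exchange preserves the sum of `σ` over
the tree; the sum over the complement of a tree is the total sum minus that.
-/

open SimpleGraph Finset

namespace SimpleGraph

variable {V : Type*} {T T' : SimpleGraph V} {x y : V}

lemma IsAcyclic.exists_mem_edges_notMem_edgeSet (hT' : T'.IsAcyclic) (hxy : T'.Adj x y)
    (hT : ¬T.Adj x y) {p : T.Walk x y} (hp : p.IsPath) : ∃ e ∈ p.edges, e ∉ T'.edgeSet := by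
  by_contra! hsub
  refine hT' _ (Path.cons_isCycle ⟨p.transfer T' hsub, hp.transfer hsub⟩ hxy.symm ?_)
  simpa [Walk.edges_transfer] using fun h ↦ hT (p.adj_of_mem_edges h).symm

lemma edgeSet_sup_edge_deleteEdges {e : Sym2 V} (hne : x ≠ y) (he : e ≠ s(x, y)) :
    ((T ⊔ edge x y).deleteEdges {e}).edgeSet = insert s(x, y) (T.edgeSet \ {e}) := by
  rw [edgeSet_deleteEdges, edgeSet_sup, edgeSet_edge_of_ne hne]
  ext f
  simp only [Set.mem_sdiff, Set.mem_union, Set.mem_singleton_iff, Set.mem_insert_iff]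
  grind

lemma IsTree.isTree_sup_edge_deleteEdges [Finite V] (hT : T.IsTree) (hne : x ≠ y)
    (hxy : ¬T.Adj x y) {p : T.Walk x y} (hp : p.IsPath) {e : Sym2 V} (he : e ∈ p.edges) :
    ((T ⊔ edge x y).deleteEdges {e}).IsTree := by
  have hadj : (T ⊔ edge x y).Adj y x := Or.inr (by simp [edge_adj, hne.symm])
  have hcycle : (Walk.cons hadj (p.mapLe le_sup_left)).IsCycle :=
    Path.cons_isCycle ⟨_, hp.mapLe le_sup_left⟩ hadj
      (by simpa using fun h ↦ hxy (p.adj_of_mem_edges h).symm)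
  have hnotBridge : ¬(T ⊔ edge x y).IsBridge e :=
    fun hb ↦ hb.notMem_edges_of_isCycle hcycle (by simp [he])
  have heT : e ∈ T.edgeSet := p.edges_subset_edgeSet he
  have hcard : Nat.card T.edgeSet + 1 = Nat.card V := (isTree_iff_connected_and_card.mp hT).2
  cases e with | h a b =>
  refine isTree_iff_connected_and_card.mpr
    ⟨(hT.connected.mono le_sup_left).connected_delete_edge_of_not_isBridge hnotBridge, ?_⟩
  rw [edgeSet_sup_edge_deleteEdges hne (fun h ↦ hxy (by rwa [h] at heT)), Nat.card_coe_set_eq,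
    Set.ncard_insert_of_notMem (by simp [hxy]), Set.ncard_sdiff_singleton_add_one heT,
    ← Nat.card_coe_set_eq, hcard]

lemma edgeFinset_sup_edge_deleteEdges [DecidableEq V] {e : Sym2 V} [Fintype T.edgeSet]
    [Fintype ((T ⊔ edge x y).deleteEdges {e}).edgeSet] (hne : x ≠ y) (he : e ≠ s(x, y)) :
    ((T ⊔ edge x y).deleteEdges {e}).edgeFinset = insert s(x, y) (T.edgeFinset.erase e) := by
  ext f
  rw [mem_edgeFinset, edgeSet_sup_edge_deleteEdges hne he]
  simp [and_comm]

theorem IsTree.sum_edgeFinset_eq {M : Type*} [AddCommMonoid M] [Fintype V] [DecidableEq V]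
    {G : SimpleGraph V} {σ : Sym2 V → M}
    (hmono : ∀ (v : V) (w : G.Walk v v), w.IsCycle →
      ∀ e ∈ w.edges, ∀ e' ∈ w.edges, σ e = σ e')
    {T₁ T₂ : SimpleGraph V} [Fintype T₁.edgeSet] [Fintype T₂.edgeSet]
    (hT₁ : T₁.IsTree) (hT₂ : T₂.IsTree) (h₁ : T₁ ≤ G) (h₂ : T₂ ≤ G) :
    ∑ e ∈ T₁.edgeFinset, σ e = ∑ e ∈ T₂.edgeFinset, σ e := by
  by_cases hsub : T₂.edgeFinset ⊆ T₁.edgeFinset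
  · have hcard : #T₁.edgeFinset ≤ #T₂.edgeFinset := by
      rw [← add_le_add_iff_right 1, hT₁.card_edgeFinset, hT₂.card_edgeFinset]
    rw [eq_of_subset_of_card_le hsub hcard]
  obtain ⟨f, hfT₂, hfT₁⟩ := not_subset.mp hsub
  induction f with | h x y =>
  rw [mem_edgeFinset, mem_edgeSet] at hfT₂ hfT₁
  obtain ⟨p, hp⟩ := hT₁.connected.exists_isPath x y
  obtain ⟨e, hep, heT₂⟩ := hT₂.isAcyclic.exists_mem_edges_notMem_edgeSet hfT₂ hfT₁ hp
  have hcycle : (Walk.cons (h₂ hfT₂).symm (p.mapLe h₁)).IsCycle :=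
    Path.cons_isCycle ⟨_, hp.mapLe h₁⟩ _
      (by simpa using fun h ↦ hfT₁ (p.adj_of_mem_edges h).symm)
  have hσ : σ e = σ s(x, y) :=
    hmono _ _ hcycle e (by simp [hep]) s(x, y) (by simp [Sym2.eq_swap])
  have hne : e ≠ s(x, y) := fun h ↦ hfT₁ (by simpa [h] using p.edges_subset_edgeSet hep)
  set T₁' := (T₁ ⊔ edge x y).deleteEdges {e}
  have : Fintype T₁'.edgeSet := Fintype.ofFinite _
  have hT₁' : T₁'.IsTree := hT₁.isTree_sup_edge_deleteEdges hfT₂.ne hfT₁ hp hep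
  have h₁' : T₁' ≤ G := (deleteEdges_le _).trans (sup_le h₁ (by simp [h₂ hfT₂]))
  have hT₁'_edges := edgeFinset_sup_edge_deleteEdges (T := T₁) hfT₂.ne hne
  have hdec : #(T₂.edgeFinset \ T₁'.edgeFinset) < #(T₂.edgeFinset \ T₁.edgeFinset) := by
    refine card_lt_card (ssubset_iff_of_subset ?_ |>.mpr ⟨s(x, y), ?_⟩) <;>
      grind [mem_edgeFinset, mem_edgeSet]
  calc ∑ e ∈ T₁.edgeFinset, σ e = ∑ e ∈ T₁'.edgeFinset, σ e := by
        rw [hT₁'_edges, sum_insert (by simp [hfT₁]), ← hσ,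
          add_sum_erase _ _ (by simpa using p.edges_subset_edgeSet hep)]
    _ = ∑ e ∈ T₂.edgeFinset, σ e := hT₁'.sum_edgeFinset_eq hmono hT₂ h₁' h₂
termination_by #(T₂.edgeFinset \ T₁.edgeFinset)
decreasing_by exact hdec

end SimpleGraph

theorem nullification_writhe_well_defined_general
    {V : Type*} [Fintype V] [DecidableEq V]
    (G : SimpleGraph V) [DecidableRel G.Adj]
    (σ : Sym2 V → ℤ)
    (hmono : ∀ (v : V) (w : G.Walk v v), w.IsCycle →
      ∀ e ∈ w.edges, ∀ e' ∈ w.edges, σ e = σ e')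
    (T₁ T₂ : SimpleGraph V) [DecidableRel T₁.Adj] [DecidableRel T₂.Adj]
    (hT₁le : T₁ ≤ G) (hT₂le : T₂ ≤ G)
    (hT₁ : T₁.IsTree) (hT₂ : T₂.IsTree) :
    ∑ e ∈ G.edgeFinset \ T₁.edgeFinset, σ e
      = ∑ e ∈ G.edgeFinset \ T₂.edgeFinset, σ e := by
  rw [sum_sdiff_eq_sub (edgeFinset_mono hT₁le), sum_sdiff_eq_sub (edgeFinset_mono hT₂le),
    hT₁.sum_edgeFinset_eq hmono hT₂ hT₁le hT₂le]

/-- Graph-theoretic core of Proposition 1 (nullification writhe):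
if every cycle of a connected simple graph `G` is monochromatic with
respect to a `±1` sign assignment `σ` on its edges, then the sum of the
signs of the edges outside a spanning tree is independent of the choice
of spanning tree. -/
theorem nullification_writhe_well_defined
    {V : Type*} [Fintype V] [DecidableEq V]
    (G : SimpleGraph V) [DecidableRel G.Adj]
    (hG : G.Connected)
    (σ : Sym2 V → ℤ)
    (hσ : ∀ e ∈ G.edgeSet, σ e = 1 ∨ σ e = -1)
    (hmono : ∀ (v : V) (w : G.Walk v v), w.IsCycle →
      ∀ e ∈ w.edges, ∀ e' ∈ w.edges, σ e = σ e')
    (T₁ T₂ : SimpleGraph V) [DecidableRel T₁.Adj] [DecidableRel T₂.Adj]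
    (hT₁le : T₁ ≤ G) (hT₂le : T₂ ≤ G)
    (hT₁ : T₁.IsTree) (hT₂ : T₂.IsTree) :
    ∑ e ∈ G.edgeFinset \ T₁.edgeFinset, σ e
      = ∑ e ∈ G.edgeFinset \ T₂.edgeFinset, σ e :=
  nullification_writhe_well_defined_general G σ hmono T₁ T₂ hT₁le hT₂le hT₁ hT₂
end

section
/- Let V be a finite type, let G be a connected simple graph on V, and let σ be a sign assignment giving each edge of G a value +1 or −1. Assume that every cycle of G is monochromatic, i.e., for every walk in G that is a cycle, all edges traversed by the cycle have the same sign. Then for any two spanning trees T₁ and T₂ of G, the sum of the signs of the edges of T₁ equals the sum of the signs of the edges of T₂. (This is the graph-theoretic core of Proposition 1 for the remaining writhe: the remaining writhe of a reduced alternating link projection is independent of the choice of the nullification set, since the crossings remaining after nullification correspond to the edges of a spanning tree of the Seifert graph.) -/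
/-!
Spanning trees have the exchange property: if `e = s(x, y)` is an edge of `T₂` missing from `T₁`,
then `T₁ + e` has a cycle through `e`; since `T₂` is acyclic this cycle has an edge `f ∉ T₂`, and
`T₁ + e - f` is again a spanning tree, with one more edge in common with `T₂`. The edges `e` and
`f` lie on a common cycle of `G`, so `σ e = σ f` and the exchange does not change the sum of the
signs. Induction on the number of edges of `T₁` outside `T₂` finishes the proof.
-/

open Finset

namespace SimpleGraph

variable {V : Type*} {T : SimpleGraph V} {x y : V}

theorem Preconnected.exists_isCycle_sup_edge (hT : T.Preconnected) (hxy : x ≠ y)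
    (hn : ¬T.Adj x y) :
    ∃ (u : V) (c : (T ⊔ edge x y).Walk u u), c.IsCycle ∧ s(x, y) ∈ c.edges := by
  refine adj_and_reachable_delete_edges_iff_exists_cycle.mp ⟨by simp [edge_adj, hxy], ?_⟩
  rw [deleteEdges_sup, deleteEdges_edge (Set.mem_singleton _), sup_bot_eq,
    deleteEdges_eq_self.mpr (by simpa)]
  exact hT x y

theorem IsAcyclic.exists_mem_edges_notMem_edgeSet_s1 {G H : SimpleGraph V} (hH : H.IsAcyclic)
    {u : V} {c : G.Walk u u} (hc : c.IsCycle) : ∃ f ∈ c.edges, f ∉ H.edgeSet := by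
  by_contra! hcH
  exact hH _ (hc.transfer hcH)

theorem IsTree.isTree_deleteEdges_sup_edge [Finite V] (hT : T.IsTree) (hxy : x ≠ y)
    (hn : ¬T.Adj x y) {u : V} {c : (T ⊔ edge x y).Walk u u} (hc : c.IsCycle) {f : Sym2 V}
    (hf : f ∈ c.edges) : ((T ⊔ edge x y).deleteEdges {f}).IsTree := by
  rw [isTree_iff_connected_and_card]
  constructor
  · induction f with
    | h a b =>
      exact (hT.connected.mono le_sup_left).connected_delete_edge_of_not_isBridge
        fun hb ↦ hb.notMem_edges_of_isCycle hc hf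
  · have hxyT : s(x, y) ∉ T.edgeSet := hn
    rw [← (isTree_iff_connected_and_card.mp hT).2, Nat.card_coe_set_eq, Nat.card_coe_set_eq,
      edgeSet_deleteEdges, Set.ncard_sdiff_singleton_of_mem (c.edges_subset_edgeSet hf),
      edgeSet_sup, edgeSet_edge_of_ne hxy, Set.union_singleton, Set.ncard_insert_of_notMem hxyT]
    omega

theorem IsTree.exists_exchange [Finite V] {T₁ T₂ : SimpleGraph V} (hT₁ : T₁.IsTree)
    (hT₂ : T₂.IsAcyclic) (h₂ : T₂.Adj x y) (h₁ : ¬T₁.Adj x y) :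
    ∃ f ∈ T₁.edgeSet, f ∉ T₂.edgeSet ∧ ((T₁ ⊔ edge x y).deleteEdges {f}).IsTree ∧
      ∃ (u : V) (c : (T₁ ⊔ edge x y).Walk u u), c.IsCycle ∧ s(x, y) ∈ c.edges ∧ f ∈ c.edges := by
  obtain ⟨u, c, hc, hxyc⟩ := hT₁.connected.preconnected.exists_isCycle_sup_edge h₂.ne h₁
  obtain ⟨f, hfc, hf₂⟩ := hT₂.exists_mem_edges_notMem_edgeSet_s1 hc
  have hfT₁ : f ∈ T₁.edgeSet := by
    have hf : f ∈ (T₁ ⊔ edge x y).edgeSet := c.edges_subset_edgeSet hfc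
    rw [edgeSet_sup, edgeSet_edge_of_ne h₂.ne] at hf
    exact hf.resolve_right fun hfe ↦ hf₂ (hfe ▸ h₂)
  exact ⟨f, hfT₁, hf₂, hT₁.isTree_deleteEdges_sup_edge h₂.ne h₁ hc hfc, u, c, hc, hxyc, hfc⟩

theorem edgeFinset_deleteEdges_sup_edge [Fintype V] [DecidableEq V] [DecidableRel T.Adj]
    (hxy : x ≠ y) (f : Sym2 V) :
    ((T ⊔ edge x y).deleteEdges {f}).edgeFinset = (insert s(x, y) T.edgeFinset).erase f := by
  ext g
  simp only [mem_edgeFinset, deleteEdges_sup, edgeSet_sup, edgeSet_deleteEdges,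
    edgeSet_edge_of_ne hxy, Set.mem_union, Set.mem_sdiff, Set.mem_singleton_iff, mem_erase,
    mem_insert]
  tauto

theorem IsTree.sum_edgeFinset_eq_of_const_on_cycles [Fintype V] [DecidableEq V] {M : Type*}
    [AddCommMonoid M] {G T₁ T₂ : SimpleGraph V} [DecidableRel T₁.Adj] [DecidableRel T₂.Adj]
    (σ : Sym2 V → M)
    (hσ : ∀ (v : V) (c : G.Walk v v), c.IsCycle → ∀ e ∈ c.edges, ∀ e' ∈ c.edges, σ e = σ e')
    (h₁ : T₁ ≤ G) (h₂ : T₂ ≤ G) (hT₁ : T₁.IsTree) (hT₂ : T₂.IsTree) :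
    ∑ e ∈ T₁.edgeFinset, σ e = ∑ e ∈ T₂.edgeFinset, σ e := by
  have hcard₂ := hT₂.card_edgeFinset
  induction hn : #(T₁.edgeFinset \ T₂.edgeFinset) generalizing T₁ with
  | zero =>
    have hcard₁ := hT₁.card_edgeFinset
    have hsub : T₁.edgeFinset ⊆ T₂.edgeFinset := by simpa using hn
    rw [eq_of_subset_of_card_le hsub (by omega)]
  | succ n ih =>
    have hcard₁ := hT₁.card_edgeFinset
    obtain ⟨e, he⟩ : (T₂.edgeFinset \ T₁.edgeFinset).Nonempty := by
      rw [← card_pos, card_sdiff_comm (by omega)]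
      omega
    induction e with | h x y =>
    obtain ⟨he₂, he₁⟩ : T₂.Adj x y ∧ ¬T₁.Adj x y := by simpa using he
    obtain ⟨f, hf₁, hf₂, hT', u, c, hc, hec, hfc⟩ := hT₁.exists_exchange hT₂.isAcyclic he₂ he₁
    have hle : T₁ ⊔ edge x y ≤ G := sup_le h₁ ((edge_le_iff G).mpr (.inr (h₂ he₂)))
    have hσf : σ f = σ s(x, y) := by
      have hcG (g) (hg : g ∈ c.edges) : g ∈ G.edgeSet :=
        edgeSet_mono hle (c.edges_subset_edgeSet hg)
      exact hσ u (c.transfer G hcG) (hc.transfer hcG) f (by simpa using hfc) _ (by simpa using hec)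
    have hfe : f ≠ s(x, y) := fun hfe ↦ hf₂ (hfe ▸ he₂)
    have hE : ((T₁ ⊔ edge x y).deleteEdges {f}).edgeFinset =
        insert s(x, y) (T₁.edgeFinset.erase f) := by
      rw [edgeFinset_deleteEdges_sup_edge he₂.ne, erase_insert_of_ne hfe.symm]
    rw [← ih (deleteEdges_le _ |>.trans hle) hT', hE, sum_insert (by simpa using fun _ ↦ he₁),
      ← add_sum_erase _ _ (mem_edgeFinset.mpr hf₁), hσf]
    rw [hE, insert_sdiff_of_mem _ (mem_edgeFinset.mpr he₂), erase_sdiff_comm,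
      card_erase_of_mem (by simpa using ⟨hf₁, hf₂⟩), hn, Nat.add_sub_cancel]

end SimpleGraph

theorem remaining_writhe_well_defined_general
    {V : Type*} [Fintype V] [DecidableEq V]
    (G : SimpleGraph V)
    (σ : Sym2 V → ℤ)
    (hmono : ∀ (v : V) (w : G.Walk v v), w.IsCycle →
      ∀ e ∈ w.edges, ∀ e' ∈ w.edges, σ e = σ e')
    (T₁ T₂ : SimpleGraph V) [DecidableRel T₁.Adj] [DecidableRel T₂.Adj]
    (hT₁le : T₁ ≤ G) (hT₂le : T₂ ≤ G)
    (hT₁ : T₁.IsTree) (hT₂ : T₂.IsTree) :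
    ∑ e ∈ T₁.edgeFinset, σ e = ∑ e ∈ T₂.edgeFinset, σ e :=
  hT₁.sum_edgeFinset_eq_of_const_on_cycles σ hmono hT₁le hT₂le hT₂

/-- Graph-theoretic core of Proposition 1 (remaining writhe):
if every cycle of a connected simple graph `G` is monochromatic with
respect to a `±1` sign assignment `σ` on its edges, then the sum of the
signs of the edges of a spanning tree is independent of the choice of
spanning tree. -/
theorem remaining_writhe_well_defined
    {V : Type*} [Fintype V] [DecidableEq V]
    (G : SimpleGraph V) [DecidableRel G.Adj]
    (hG : G.Connected)
    (σ : Sym2 V → ℤ)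
    (hσ : ∀ e ∈ G.edgeSet, σ e = 1 ∨ σ e = -1)
    (hmono : ∀ (v : V) (w : G.Walk v v), w.IsCycle →
      ∀ e ∈ w.edges, ∀ e' ∈ w.edges, σ e = σ e')
    (T₁ T₂ : SimpleGraph V) [DecidableRel T₁.Adj] [DecidableRel T₂.Adj]
    (hT₁le : T₁ ≤ G) (hT₂le : T₂ ≤ G)
    (hT₁ : T₁.IsTree) (hT₂ : T₂.IsTree) :
    ∑ e ∈ T₁.edgeFinset, σ e = ∑ e ∈ T₂.edgeFinset, σ e :=
  remaining_writhe_well_defined_general G σ hmono T₁ T₂ hT₁le hT₂le hT₁ hT₂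
end
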